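/- arXiv:1102.3104 — 4 statements merged into one kernel-verified Lean document; each statement's English description precedes it below -/
import Mathlib

section
/- Let w₁, w₂ be holomorphic on the unit disc with Wronskian w₁w₂' - w₁'w₂ ≡ 1 and satisfying |w₁(z)|² + |w₂(z)|² ≤ 1/ε for all z in the disc, where ε > 0. Then the spherical derivative of f = w₁/w₂ satisfies f^#(z) ≤ (2/ε)/(1-|z|)² for all z ∈ 𝔻. -/
/-!
At a point `z` with `w₂ z ≠ 0`, the Wronskian identity gives `f' = -1 / w₂²`, so
`f^#(z) = 1 / (|w₁ z|² + |w₂ z|²)`; at a zero of `w₂` the quotient has a pole and Lean's `deriv`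
vanishes. On the disc of radius `R = 1 - |z|` about `z` both `|wᵢ|` are bounded by `√(1/ε)`,
so Cauchy's estimate bounds `|wᵢ'(z)|` by `√(1/ε) / R`, and evaluating the Wronskian at `z`
gives `R ≤ √(1/ε) (|w₁ z| + |w₂ z|)`, i.e. `ε R² ≤ 2 (|w₁ z|² + |w₂ z|²)`.
-/

open Complex Metric

/-- The spherical derivative `f^#(z) = |f'(z)| / (1 + |f(z)|^2)`. -/
noncomputable def sphDeriv (f : ℂ → ℂ) (z : ℂ) : ℝ :=
  ‖deriv f z‖ / (1 + ‖f z‖ ^ 2)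

open Set Filter Topology

theorem Complex.norm_deriv_le_of_forall_mem_ball_norm_le {F : Type*} [NormedAddCommGroup F]
    [NormedSpace ℂ F] {c : ℂ} {R C : ℝ} {f : ℂ → F} (hR : 0 < R)
    (hd : DifferentiableOn ℂ f (ball c R)) (hC : ∀ z ∈ ball c R, ‖f z‖ ≤ C) :
    ‖deriv f c‖ ≤ C / R := by
  have hρ : ∀ ρ ∈ Ioo 0 R, ‖deriv f c‖ ≤ C / ρ := fun ρ ⟨hρ₀, hρR⟩ =>
    norm_deriv_le_of_forall_mem_sphere_norm_le hρ₀
      (hd.diffContOnCl_ball (closedBall_subset_ball hρR))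
      fun z hz => hC z (sphere_subset_ball hρR hz)
  have hlim : Tendsto (fun ρ => C / ρ) (𝓝[<] R) (𝓝 (C / R)) :=
    (tendsto_const_nhds.div tendsto_id hR.ne').mono_left nhdsWithin_le_nhds
  exact ge_of_tendsto hlim (eventually_of_mem (Ioo_mem_nhdsLT hR) hρ)

theorem not_continuousAt_div_of_hasDerivAt {𝕜 : Type*} [NontriviallyNormedField 𝕜]
    {f g : 𝕜 → 𝕜} {g' z : 𝕜} (hf : ContinuousAt f z) (hfz : f z ≠ 0) (hg : HasDerivAt g g' z)
    (hg' : g' ≠ 0) (hgz : g z = 0) : ¬ContinuousAt (fun t => f t / g t) z := by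
  intro hq
  have hprod : Tendsto (fun t => f t / g t * g t) (𝓝[≠] z) (𝓝 0) := by
    simpa [hgz] using (hq.tendsto.mul hg.continuousAt.tendsto).mono_left nhdsWithin_le_nhds
  have heq : (fun t => f t / g t * g t) =ᶠ[𝓝[≠] z] f := by
    filter_upwards [hg.eventually_ne (c := 0) hg'] with t ht using div_mul_cancel₀ _ ht
  exact hfz (tendsto_nhds_unique (hf.tendsto.mono_left nhdsWithin_le_nhds) (hprod.congr' heq))

section Wronskian

variable {w₁ w₂ : ℂ → ℂ} {z : ℂ}

theorem sphDeriv_div_of_wronskian_eq_one (h₁ : DifferentiableAt ℂ w₁ z)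
    (h₂ : DifferentiableAt ℂ w₂ z) (hW : w₁ z * deriv w₂ z - deriv w₁ z * w₂ z = 1)
    (hz : w₂ z ≠ 0) :
    sphDeriv (fun t => w₁ t / w₂ t) z = (‖w₁ z‖ ^ 2 + ‖w₂ z‖ ^ 2)⁻¹ := by
  have hderiv : deriv (fun t => w₁ t / w₂ t) z = -1 / w₂ z ^ 2 := by
    rw [deriv_fun_div h₁ h₂ hz, ← hW]
    ring
  have hb : 0 < ‖w₂ z‖ := norm_pos_iff.2 hz
  rw [sphDeriv, hderiv, norm_div, norm_div, norm_neg, norm_one, norm_pow]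
  field_simp
  ring

theorem sphDeriv_div_le_of_wronskian_eq_one (h₁ : DifferentiableAt ℂ w₁ z)
    (h₂ : DifferentiableAt ℂ w₂ z) (hW : w₁ z * deriv w₂ z - deriv w₁ z * w₂ z = 1) :
    sphDeriv (fun t => w₁ t / w₂ t) z ≤ (‖w₁ z‖ ^ 2 + ‖w₂ z‖ ^ 2)⁻¹ := by
  by_cases hz : w₂ z = 0
  · rw [hz, mul_zero, sub_zero] at hW
    have hq := not_continuousAt_div_of_hasDerivAt h₁.continuousAt (left_ne_zero_of_mul_eq_one hW)
      h₂.hasDerivAt (right_ne_zero_of_mul_eq_one hW) hz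
    rw [sphDeriv, deriv_zero_of_not_differentiableAt fun hd => hq hd.continuousAt, norm_zero,
      zero_div]
    positivity
  · exact (sphDeriv_div_of_wronskian_eq_one h₁ h₂ hW hz).le

variable {R M : ℝ}

theorem le_mul_norm_add_norm_of_wronskian_eq_one (hR : 0 < R)
    (h₁ : DifferentiableOn ℂ w₁ (ball z R)) (h₂ : DifferentiableOn ℂ w₂ (ball z R))
    (hW : w₁ z * deriv w₂ z - deriv w₁ z * w₂ z = 1)
    (hM₁ : ∀ t ∈ ball z R, ‖w₁ t‖ ≤ M) (hM₂ : ∀ t ∈ ball z R, ‖w₂ t‖ ≤ M) :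
    R ≤ M * (‖w₁ z‖ + ‖w₂ z‖) := by
  have d₁ := norm_deriv_le_of_forall_mem_ball_norm_le hR h₁ hM₁
  have d₂ := norm_deriv_le_of_forall_mem_ball_norm_le hR h₂ hM₂
  have hW' : 1 ≤ ‖w₁ z‖ * (M / R) + M / R * ‖w₂ z‖ :=
    calc (1 : ℝ) = ‖w₁ z * deriv w₂ z - deriv w₁ z * w₂ z‖ := by rw [hW, norm_one]
      _ ≤ ‖w₁ z‖ * ‖deriv w₂ z‖ + ‖deriv w₁ z‖ * ‖w₂ z‖ := by
        simpa only [norm_mul] using norm_sub_le (w₁ z * deriv w₂ z) (deriv w₁ z * w₂ z)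
      _ ≤ ‖w₁ z‖ * (M / R) + M / R * ‖w₂ z‖ := by gcongr
  exact (one_le_div hR).1 (hW'.trans_eq (by ring))

theorem sq_le_two_mul_of_wronskian_eq_one {K : ℝ} (hR : 0 < R)
    (h₁ : DifferentiableOn ℂ w₁ (ball z R)) (h₂ : DifferentiableOn ℂ w₂ (ball z R))
    (hW : w₁ z * deriv w₂ z - deriv w₁ z * w₂ z = 1)
    (hK : ∀ t ∈ ball z R, ‖w₁ t‖ ^ 2 + ‖w₂ t‖ ^ 2 ≤ K) :
    R ^ 2 ≤ 2 * K * (‖w₁ z‖ ^ 2 + ‖w₂ z‖ ^ 2) := by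
  have hK₀ : 0 ≤ K := (by positivity : (0 : ℝ) ≤ _).trans (hK z (mem_ball_self hR))
  have hR' := le_mul_norm_add_norm_of_wronskian_eq_one hR h₁ h₂ hW
    (fun t ht => Real.le_sqrt_of_sq_le (by nlinarith [hK t ht]))
    (fun t ht => Real.le_sqrt_of_sq_le (by nlinarith [hK t ht]))
  calc R ^ 2 ≤ (√K * (‖w₁ z‖ + ‖w₂ z‖)) ^ 2 := by gcongr
    _ = K * (‖w₁ z‖ + ‖w₂ z‖) ^ 2 := by rw [mul_pow, Real.sq_sqrt hK₀]
    _ ≤ K * (2 * (‖w₁ z‖ ^ 2 + ‖w₂ z‖ ^ 2)) := by gcongr; exact add_sq_le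
    _ = 2 * K * (‖w₁ z‖ ^ 2 + ‖w₂ z‖ ^ 2) := by ring

end Wronskian

/-- If `w₁, w₂` are holomorphic on the unit disc with Wronskian `≡ 1` and
`|w₁|² + |w₂|² ≤ 1/ε`, then `f = w₁/w₂` satisfies `f^#(z) ≤ (2/ε)/(1-|z|)²`. -/
theorem stmt3 (ε : ℝ) (hε : 0 < ε) (w₁ w₂ : ℂ → ℂ)
    (h₁ : DifferentiableOn ℂ w₁ (ball (0 : ℂ) 1))
    (h₂ : DifferentiableOn ℂ w₂ (ball (0 : ℂ) 1))
    (hW : ∀ z ∈ ball (0 : ℂ) 1, w₁ z * deriv w₂ z - deriv w₁ z * w₂ z = 1)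
    (hb : ∀ z ∈ ball (0 : ℂ) 1, ‖w₁ z‖ ^ 2 + ‖w₂ z‖ ^ 2 ≤ 1 / ε) :
    ∀ z ∈ ball (0 : ℂ) 1,
      sphDeriv (fun t => w₁ t / w₂ t) z ≤ (2 / ε) / (1 - ‖z‖) ^ 2 := by
  intro z hz
  have hR : 0 < 1 - ‖z‖ := by simpa using hz
  have hsub : ball z (1 - ‖z‖) ⊆ ball 0 1 := ball_subset_ball' (by simp)
  have hsq := sq_le_two_mul_of_wronskian_eq_one hR (h₁.mono hsub) (h₂.mono hsub) (hW z hz)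
    fun t ht => hb t (hsub ht)
  have hnorm : 0 < ‖w₁ z‖ ^ 2 + ‖w₂ z‖ ^ 2 :=
    pos_of_mul_pos_right ((pow_pos hR 2).trans_le hsq) (by positivity)
  have hnhds := isOpen_ball.mem_nhds hz
  calc sphDeriv (fun t => w₁ t / w₂ t) z ≤ (‖w₁ z‖ ^ 2 + ‖w₂ z‖ ^ 2)⁻¹ :=
        sphDeriv_div_le_of_wronskian_eq_one (h₁.differentiableAt hnhds)
          (h₂.differentiableAt hnhds) (hW z hz)
    _ ≤ (2 / ε) / (1 - ‖z‖) ^ 2 := by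
        rw [le_div_iff₀ (pow_pos hR 2), inv_mul_le_iff₀ hnorm]
        exact hsq.trans_eq (by ring)
end

section
/- Let w₁, w₂ be holomorphic on the unit disc with w₁w₂' - w₁'w₂ ≡ 1 and |w₁(z)|² + |w₂(z)|² ≤ 1/ε for all z, where ε > 0. Let S_f be defined by (1/2)S_f = w₁'w₂'' - w₁''w₂'. Then |S_f(z)| ≤ (4/ε)/(1-|z|)³ for all z ∈ 𝔻. -/
open Complex Metric


/-- Cauchy estimate for iterated derivatives. -/
lemma cauchyEst {R C : ℝ} (hR : 0 < R) {c : ℂ} {f : ℂ → ℂ}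
    (hd : DifferentiableOn ℂ f (closedBall c R))
    (hC : ∀ z ∈ closedBall c R, ‖f z‖ ≤ C) (n : ℕ) :
    ‖iteratedDeriv n f c‖ ≤ (n.factorial : ℝ) * C / R ^ n := by
  lift R to NNReal using hR.le
  have hR' : 0 < R := by exact_mod_cast hR
  have hp : HasFPowerSeriesOnBall f (cauchyPowerSeries f c R) c R :=
    hd.hasFPowerSeriesOnBall hR'
  have hC0 : 0 ≤ C := le_trans (norm_nonneg _) (hC c (mem_closedBall_self hR.le))
  have hint : ∫ θ in (0:ℝ)..2*Real.pi, ‖f (circleMap c R θ)‖ ≤ ∫ _θ in (0:ℝ)..2*Real.pi, C := by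
    apply intervalIntegral.integral_mono_on Real.two_pi_pos.le ?_ intervalIntegrable_const
    · intro θ _
      exact hC _ (sphere_subset_closedBall (circleMap_mem_sphere c hR.le θ))
    · apply ContinuousOn.intervalIntegrable
      apply ContinuousOn.norm
      apply hd.continuousOn.comp (continuous_circleMap c R).continuousOn
      intro θ _
      exact sphere_subset_closedBall (circleMap_mem_sphere c hR.le θ)
  have hpn : ‖cauchyPowerSeries f c R n‖ ≤ C * ((R:ℝ)⁻¹) ^ n := by
    refine (norm_cauchyPowerSeries_le f c R n).trans ?_
    rw [_root_.abs_of_nonneg (le_of_lt hR)]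
    have key : (2 * Real.pi)⁻¹ * (∫ θ in (0:ℝ)..2*Real.pi, ‖f (circleMap c R θ)‖) ≤ C := by
      have h2 : (2 * Real.pi)⁻¹ * (∫ θ in (0:ℝ)..2*Real.pi, ‖f (circleMap c R θ)‖)
          ≤ (2 * Real.pi)⁻¹ * ∫ _θ in (0:ℝ)..2*Real.pi, C :=
        mul_le_mul_of_nonneg_left hint (inv_nonneg.mpr Real.two_pi_pos.le)
      refine h2.trans ?_
      rw [intervalIntegral.integral_const]
      rw [sub_zero, smul_eq_mul, ← mul_assoc, inv_mul_cancel₀ Real.two_pi_pos.ne', one_mul]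
    exact mul_le_mul_of_nonneg_right key (by positivity)
  have hiter : iteratedDeriv n f c = n.factorial • (cauchyPowerSeries f c R n fun _ => (1:ℂ)) := by
    rw [iteratedDeriv_eq_iteratedFDeriv, ← hp.factorial_smul 1 n]
  rw [hiter]
  calc ‖n.factorial • (cauchyPowerSeries f c R n fun _ => (1:ℂ))‖
      = (n.factorial : ℝ) * ‖cauchyPowerSeries f c R n fun _ => (1:ℂ)‖ := by
        rw [← Nat.cast_smul_eq_nsmul ℝ, norm_smul]; simp
    _ ≤ (n.factorial : ℝ) * (‖cauchyPowerSeries f c R n‖ * ∏ _i : Fin n, ‖(1:ℂ)‖) := by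
        gcongr
        exact (cauchyPowerSeries f c R n).le_opNorm _
    _ ≤ (n.factorial : ℝ) * (C * ((R:ℝ)⁻¹) ^ n) := by
        simp only [norm_one, Finset.prod_const_one, mul_one]
        gcongr
    _ = (n.factorial : ℝ) * C / R ^ n := by
        rw [inv_pow]; ring

lemma twoCS (a b x y : ℂ) : ‖a*x + b*y‖ ≤
    Real.sqrt (‖a‖^2+‖b‖^2) * Real.sqrt (‖x‖^2+‖y‖^2) := by
  have h1 : ‖a*x + b*y‖ ≤ ‖a‖*‖x‖ + ‖b‖*‖y‖ := by
    refine (norm_add_le _ _).trans ?_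
    simp [norm_mul]
  refine h1.trans ?_
  set s := Real.sqrt (‖a‖^2+‖b‖^2) with hs
  set t := Real.sqrt (‖x‖^2+‖y‖^2) with ht
  have hs2 : s^2 = ‖a‖^2+‖b‖^2 := Real.sq_sqrt (by positivity)
  have ht2 : t^2 = ‖x‖^2+‖y‖^2 := Real.sq_sqrt (by positivity)
  have hsn : 0 ≤ s := Real.sqrt_nonneg _
  have htn : 0 ≤ t := Real.sqrt_nonneg _
  nlinarith [sq_nonneg (‖a‖*‖y‖ - ‖b‖*‖x‖), sq_nonneg (s*t - ‖a‖*‖x‖ - ‖b‖*‖y‖),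
    norm_nonneg a, norm_nonneg b, norm_nonneg x, norm_nonneg y, mul_nonneg hsn htn]

/-- If `w₁, w₂` are holomorphic on the unit disc with Wronskian `≡ 1` and
`|w₁|² + |w₂|² ≤ 1/ε`, then the Schwarzian derivative
`S_f = 2(w₁'w₂'' - w₁''w₂')` of `f = w₁/w₂` satisfies `|S_f(z)| ≤ (4/ε)/(1-|z|)³`. -/
theorem stmt5 (ε : ℝ) (hε : 0 < ε) (w₁ w₂ : ℂ → ℂ)
    (h₁ : DifferentiableOn ℂ w₁ (ball (0 : ℂ) 1))
    (h₂ : DifferentiableOn ℂ w₂ (ball (0 : ℂ) 1))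
    (hW : ∀ z ∈ ball (0 : ℂ) 1, w₁ z * deriv w₂ z - deriv w₁ z * w₂ z = 1)
    (hb : ∀ z ∈ ball (0 : ℂ) 1, ‖w₁ z‖ ^ 2 + ‖w₂ z‖ ^ 2 ≤ 1 / ε) :
    ∀ z ∈ ball (0 : ℂ) 1,
      ‖2 * (deriv w₁ z * deriv (deriv w₂) z - deriv (deriv w₁) z * deriv w₂ z)‖
        ≤ (4 / ε) / (1 - ‖z‖) ^ 3 := by
  have A₁ : AnalyticOnNhd ℂ w₁ (ball (0:ℂ) 1) := h₁.analyticOnNhd isOpen_ball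
  have A₂ : AnalyticOnNhd ℂ w₂ (ball (0:ℂ) 1) := h₂.analyticOnNhd isOpen_ball
  have A₁' : AnalyticOnNhd ℂ (deriv w₁) (ball (0:ℂ) 1) := A₁.deriv
  have A₂' : AnalyticOnNhd ℂ (deriv w₂) (ball (0:ℂ) 1) := A₂.deriv
  -- step 1 : w₁ w₂'' = w₁'' w₂ on the ball
  have eq1 : ∀ z ∈ ball (0:ℂ) 1,
      w₁ z * deriv (deriv w₂) z = deriv (deriv w₁) z * w₂ z := by
    intro z hz
    have d₁ : DifferentiableAt ℂ w₁ z := (A₁ z hz).differentiableAt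
    have d₂ : DifferentiableAt ℂ w₂ z := (A₂ z hz).differentiableAt
    have d₁' : DifferentiableAt ℂ (deriv w₁) z := (A₁' z hz).differentiableAt
    have d₂' : DifferentiableAt ℂ (deriv w₂) z := (A₂' z hz).differentiableAt
    have hdW : deriv (fun z => w₁ z * deriv w₂ z - deriv w₁ z * w₂ z) z = 0 := by
      have hev : (fun z => w₁ z * deriv w₂ z - deriv w₁ z * w₂ z) =ᶠ[nhds z]
          (fun _ => (1:ℂ)) := Filter.eventuallyEq_of_mem (isOpen_ball.mem_nhds hz) hW
      rw [hev.deriv_eq]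
      exact deriv_const z 1
    have e : deriv (fun z => w₁ z * deriv w₂ z - deriv w₁ z * w₂ z) z
        = (deriv w₁ z * deriv w₂ z + w₁ z * deriv (deriv w₂) z)
          - (deriv (deriv w₁) z * w₂ z + deriv w₁ z * deriv w₂ z) := by
      rw [deriv_fun_sub (f := fun y => w₁ y * deriv w₂ y) (g := fun y => deriv w₁ y * w₂ y) (d₁.mul d₂') (d₁'.mul d₂), deriv_fun_mul d₁ d₂', deriv_fun_mul d₁' d₂]
    rw [e] at hdW
    linear_combination hdW
  intro z₀ hz₀
  have hz₀' : ‖z₀‖ < 1 := mem_ball_zero_iff.mp hz₀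
  set Sh : ℂ := deriv w₁ z₀ * deriv (deriv w₂) z₀ - deriv (deriv w₁) z₀ * deriv w₂ z₀ with hSh
  have hzW := hW z₀ hz₀
  have heq1 := eq1 z₀ hz₀
  have id1 : deriv (deriv w₁) z₀ = -(w₁ z₀) * Sh := by
    rw [hSh]; linear_combination deriv w₁ z₀ * heq1 - deriv (deriv w₁) z₀ * hzW
  have id2 : deriv (deriv w₂) z₀ = -(w₂ z₀) * Sh := by
    rw [hSh]; linear_combination deriv w₂ z₀ * heq1 - deriv (deriv w₂) z₀ * hzW
  set M : ℝ := Real.sqrt (1/ε) with hM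
  have hM0 : 0 < M := Real.sqrt_pos.mpr (by positivity)
  have hM2 : M^2 = 1/ε := Real.sq_sqrt (by positivity)
  set S₀ : ℝ := ‖w₁ z₀‖^2 + ‖w₂ z₀‖^2 with hS₀
  set s : ℝ := Real.sqrt S₀ with hs
  have hs2 : s^2 = S₀ := Real.sq_sqrt (by positivity)
  have hsn : 0 ≤ s := Real.sqrt_nonneg _
  have conj_self : ∀ a : ℂ, (starRingEnd ℂ) a * a = ((‖a‖^2 : ℝ) : ℂ) := by
    intro a
    rw [mul_comm, Complex.mul_conj, Complex.normSq_eq_norm_sq]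
  have key : ∀ r : ℝ, 0 < r → r < 1 - ‖z₀‖ → ‖2 * Sh‖ ≤ (4/ε)/r^3 := by
    intro r hr hrd
    have hsub : closedBall z₀ r ⊆ ball (0:ℂ) 1 := by
      intro z hz
      rw [mem_closedBall, dist_eq_norm] at hz
      rw [mem_ball_zero_iff]
      calc ‖z‖ = ‖z₀ + (z - z₀)‖ := by ring_nf
        _ ≤ ‖z₀‖ + ‖z - z₀‖ := norm_add_le _ _
        _ ≤ ‖z₀‖ + r := by linarith
        _ < 1 := by linarith
    have sqrtle : ∀ z ∈ closedBall z₀ r, Real.sqrt (‖w₁ z‖^2 + ‖w₂ z‖^2) ≤ M := by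
      intro z hz
      exact Real.sqrt_le_sqrt (hb z (hsub hz))
    -- the function G, with G'(z₀) = Wronskian = 1
    set G : ℂ → ℂ := fun z => w₁ z₀ * w₂ z - w₂ z₀ * w₁ z with hG
    have hGd : DifferentiableOn ℂ G (closedBall z₀ r) :=
      ((h₂.mono hsub).const_mul _).sub ((h₁.mono hsub).const_mul _)
    have hGb : ∀ z ∈ closedBall z₀ r, ‖G z‖ ≤ s * M := by
      intro z hz
      have hcs := twoCS (w₁ z₀) (-(w₂ z₀)) (w₂ z) (w₁ z)
      have hGz : G z = w₁ z₀ * w₂ z + (-(w₂ z₀)) * w₁ z := by rw [hG]; ring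
      rw [hGz]
      refine hcs.trans ?_
      rw [norm_neg]
      have h1 : Real.sqrt (‖w₂ z‖^2 + ‖w₁ z‖^2) ≤ M := by
        rw [add_comm]; exact sqrtle z hz
      exact mul_le_mul_of_nonneg_left h1 hsn
    have hstep1 : (1:ℝ) ≤ s * M / r := by
      have hdG : deriv G z₀ = 1 := by
        have d₁ : DifferentiableAt ℂ w₁ z₀ := (A₁ z₀ hz₀).differentiableAt
        have d₂ : DifferentiableAt ℂ w₂ z₀ := (A₂ z₀ hz₀).differentiableAt
        have e : deriv G z₀ = w₁ z₀ * deriv w₂ z₀ - w₂ z₀ * deriv w₁ z₀ := by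
          rw [hG, deriv_fun_sub (d₂.const_mul _) (d₁.const_mul _),
            deriv_const_mul _ d₂, deriv_const_mul _ d₁]
        rw [e]; linear_combination hzW
      have hce := cauchyEst hr hGd hGb 1
      rw [iteratedDeriv_one, hdG] at hce
      simpa using hce
    -- the function H, with H''(z₀) = -S₀ * Sh
    set H : ℂ → ℂ := fun z => (starRingEnd ℂ) (w₁ z₀) * w₁ z
        + (starRingEnd ℂ) (w₂ z₀) * w₂ z with hH
    have hHd : DifferentiableOn ℂ H (closedBall z₀ r) :=
      ((h₁.mono hsub).const_mul _).add ((h₂.mono hsub).const_mul _)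
    have hHb : ∀ z ∈ closedBall z₀ r, ‖H z‖ ≤ s * M := by
      intro z hz
      have hcs := twoCS ((starRingEnd ℂ) (w₁ z₀)) ((starRingEnd ℂ) (w₂ z₀)) (w₁ z) (w₂ z)
      refine hcs.trans ?_
      rw [RCLike.norm_conj, RCLike.norm_conj]
      exact mul_le_mul_of_nonneg_left (sqrtle z hz) hsn
    have hH2 : deriv (deriv H) z₀ = (starRingEnd ℂ) (w₁ z₀) * deriv (deriv w₁) z₀
        + (starRingEnd ℂ) (w₂ z₀) * deriv (deriv w₂) z₀ := by
      have hstep : Set.EqOn (deriv H)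
          (fun z => (starRingEnd ℂ) (w₁ z₀) * deriv w₁ z
            + (starRingEnd ℂ) (w₂ z₀) * deriv w₂ z) (ball (0:ℂ) 1) := by
        intro z hz
        have d₁ : DifferentiableAt ℂ w₁ z := (A₁ z hz).differentiableAt
        have d₂ : DifferentiableAt ℂ w₂ z := (A₂ z hz).differentiableAt
        rw [hH, deriv_fun_add (d₁.const_mul _) (d₂.const_mul _),
          deriv_const_mul _ d₁, deriv_const_mul _ d₂]
      have hev : deriv H =ᶠ[nhds z₀]
          (fun z => (starRingEnd ℂ) (w₁ z₀) * deriv w₁ z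
            + (starRingEnd ℂ) (w₂ z₀) * deriv w₂ z) :=
        Filter.eventuallyEq_of_mem (isOpen_ball.mem_nhds hz₀) hstep
      rw [hev.deriv_eq]
      have d₁' : DifferentiableAt ℂ (deriv w₁) z₀ := (A₁' z₀ hz₀).differentiableAt
      have d₂' : DifferentiableAt ℂ (deriv w₂) z₀ := (A₂' z₀ hz₀).differentiableAt
      rw [deriv_fun_add (d₁'.const_mul _) (d₂'.const_mul _),
        deriv_const_mul _ d₁', deriv_const_mul _ d₂']
    have hval : deriv (deriv H) z₀ = -Sh * ((S₀ : ℝ) : ℂ) := by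
      rw [hH2, id1, id2, hS₀]
      have c1 := conj_self (w₁ z₀)
      have c2 := conj_self (w₂ z₀)
      push_cast at c1 c2 ⊢
      linear_combination (-Sh) * c1 + (-Sh) * c2
    have hstep2 : ‖Sh‖ * S₀ ≤ 2 * (s * M) / r^2 := by
      have hce := cauchyEst hr hHd hHb 2
      have h2it : iteratedDeriv 2 H z₀ = deriv (deriv H) z₀ := by
        rw [iteratedDeriv_succ, iteratedDeriv_one]
      rw [h2it, hval] at hce
      have hnorm : ‖-Sh * ((S₀ : ℝ) : ℂ)‖ = ‖Sh‖ * S₀ := by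
        rw [norm_mul, norm_neg, Complex.norm_real, Real.norm_eq_abs,
          _root_.abs_of_nonneg (by positivity : (0:ℝ) ≤ S₀)]
      rw [hnorm] at hce
      have : (Nat.factorial 2 : ℝ) = 2 := by norm_num [Nat.factorial]
      rw [this] at hce
      linarith [hce]
    -- combine
    have hrs : r ≤ s * M := by
      rw [le_div_iff₀ hr] at hstep1; linarith
    have hs0 : 0 < s := by nlinarith
    have e1 : ‖Sh‖ * s^2 * r^2 ≤ 2 * s * M := by
      rw [le_div_iff₀ (by positivity : (0:ℝ) < r^2)] at hstep2
      calc ‖Sh‖ * s^2 * r^2 = ‖Sh‖ * S₀ * r^2 := by rw [hs2]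
        _ ≤ 2 * (s*M) := hstep2
        _ = 2 * s * M := by ring
    have e2 : ‖Sh‖ * s^2 * r^3 ≤ 2 * s * M * r := by
      calc ‖Sh‖ * s^2 * r^3 = (‖Sh‖ * s^2 * r^2) * r := by ring
        _ ≤ (2 * s * M) * r := by
            apply mul_le_mul_of_nonneg_right e1 hr.le
    have e3 : 2 * s * M * r ≤ 2 * s^2 * M^2 := by nlinarith
    have e5 : ‖Sh‖ * s^2 * r^3 ≤ 2 * s^2 * M^2 := le_trans e2 e3
    have e4 : ‖Sh‖ * r^3 ≤ 2 * M^2 := by nlinarith [e5, mul_pos hs0 hs0]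
    rw [norm_mul]
    have h2n : ‖(2:ℂ)‖ = 2 := by norm_num
    rw [h2n, le_div_iff₀ (by positivity : (0:ℝ) < r^3)]
    have h4 : (4:ℝ)/ε = 2*(2*M^2) := by rw [hM2]; ring
    rw [h4]
    linarith
  -- pass to the limit r → (1 - ‖z₀‖)⁻
  set d : ℝ := 1 - ‖z₀‖ with hdd
  have hd0 : 0 < d := by rw [hdd]; linarith
  by_contra hcon
  push_neg at hcon
  have cont : Filter.Tendsto (fun r : ℝ => (4/ε)/r^3) (nhdsWithin d (Set.Iio d))
      (nhds ((4/ε)/d^3)) := by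
    apply Filter.Tendsto.mono_left _ nhdsWithin_le_nhds
    exact (ContinuousAt.div continuousAt_const (continuousAt_id.pow 3)
      (pow_ne_zero 3 hd0.ne')).tendsto
  have ev1 : ∀ᶠ r in nhdsWithin d (Set.Iio d),
      (4/ε)/r^3 < ‖2 * Sh‖ := cont.eventually_lt_const hcon
  have ev2 : ∀ᶠ r in nhdsWithin d (Set.Iio d), r ∈ Set.Ioo (0:ℝ) d :=
    Ioo_mem_nhdsLT_of_mem ⟨hd0, le_refl d⟩
  obtain ⟨r, hlt, hr0, hrd⟩ := (ev1.and ev2).exists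
  exact absurd (key r hr0 hrd) (not_le.mpr hlt)
end

section
/- Let w₁, w₂ be holomorphic on the unit disc with w₁(0) = 0 and Wronskian w₁w₂' - w₁'w₂ ≡ 1, and set f = w₁/w₂, f^# = 1/(|w₁|²+|w₂|²). Then for every r ∈ (0,1), min_{|z|=r} |z| f^#(z) ≤ 1/2; consequently inf_{z∈𝔻} f^#(z) ≤ 1/2. -/
/-!
The function `v(z) = w₁(z) w₂(z) / z` extends holomorphically to the disc with
`v(0) = w₁'(0) w₂(0) = -1`, the Wronskian identity read at `z = 0`. By the maximum modulus
principle `|v| ≥ 1` somewhere on each circle `|z| = r`, and there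
`|w₁|² + |w₂|² ≥ 2 |w₁| |w₂| = 2 r |v| ≥ 2 r`.
-/

open Complex Metric

theorem exists_mem_sphere_norm_le_norm {F : Type*} [NormedAddCommGroup F] [NormedSpace ℂ F]
    {f : ℂ → F} {c : ℂ} {r : ℝ} (hr : 0 < r) (hf : DiffContOnCl ℂ f (ball c r)) :
    ∃ z ∈ sphere c r, ‖f c‖ ≤ ‖f z‖ := by
  obtain ⟨z, hz, hmax⟩ :=
    exists_mem_frontier_isMaxOn_norm isBounded_ball (nonempty_ball.2 hr) hf
  rw [frontier_ball c hr.ne'] at hz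
  exact ⟨z, hz, hmax (subset_closure (mem_ball_self hr))⟩

theorem exists_norm_eq_mul_norm_deriv_le {w₁ w₂ : ℂ → ℂ} {R r : ℝ}
    (h₁ : DifferentiableOn ℂ w₁ (ball 0 R)) (h₂ : DifferentiableOn ℂ w₂ (ball 0 R))
    (h0 : w₁ 0 = 0) (hr0 : 0 < r) (hr : r < R) :
    ∃ z : ℂ, ‖z‖ = r ∧ r * ‖deriv w₁ 0 * w₂ 0‖ ≤ ‖w₁ z‖ * ‖w₂ z‖ := by
  set v : ℂ → ℂ := fun z ↦ dslope w₁ 0 z * w₂ z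
  have hv : DifferentiableOn ℂ v (ball 0 R) :=
    ((differentiableOn_dslope (ball_mem_nhds 0 (hr0.trans hr))).2 h₁).mul h₂
  obtain ⟨z, hz, hle⟩ :=
    exists_mem_sphere_norm_le_norm hr0 (hv.diffContOnCl_ball (closedBall_subset_ball hr))
  have hz_norm : ‖z‖ = r := mem_sphere_zero_iff_norm.1 hz
  have hz0 : z ≠ 0 := ne_of_mem_sphere hz hr0.ne'
  have hvz : r * ‖v z‖ = ‖w₁ z‖ * ‖w₂ z‖ := by
    simp only [v, dslope_of_ne _ hz0, slope_def_field, h0, sub_zero, norm_mul, norm_div,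
      hz_norm]
    field_simp
  refine ⟨z, hz_norm, ?_⟩
  rw [← hvz, ← dslope_same]
  gcongr

/-- If `w₁, w₂` are holomorphic on the unit disc with `w₁(0) = 0` and Wronskian `≡ 1`,
and `f^# = 1/(|w₁|²+|w₂|²)`, then `min_{|z|=r} |z| f^#(z) ≤ 1/2` for each `0 < r < 1`,
and consequently `inf_𝔻 f^# ≤ 1/2`. -/
theorem stmt13 (w₁ w₂ : ℂ → ℂ)
    (h₁ : DifferentiableOn ℂ w₁ (ball (0 : ℂ) 1))
    (h₂ : DifferentiableOn ℂ w₂ (ball (0 : ℂ) 1))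
    (h0 : w₁ 0 = 0)
    (hW : ∀ z ∈ ball (0 : ℂ) 1, w₁ z * deriv w₂ z - deriv w₁ z * w₂ z = 1) :
    (∀ r : ℝ, 0 < r → r < 1 →
      ∃ z : ℂ, ‖z‖ = r ∧ ‖z‖ * (1 / (‖w₁ z‖ ^ 2 + ‖w₂ z‖ ^ 2)) ≤ 1 / 2) ∧
    (∀ δ : ℝ, 0 < δ →
      ∃ z ∈ ball (0 : ℂ) 1, 1 / (‖w₁ z‖ ^ 2 + ‖w₂ z‖ ^ 2) < 1 / 2 + δ) := by
  have hv0 : deriv w₁ 0 * w₂ 0 = -1 := by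
    simpa [h0, neg_eq_iff_eq_neg] using hW 0 (mem_ball_self one_pos)
  have key : ∀ r : ℝ, 0 < r → r < 1 →
      ∃ z : ℂ, ‖z‖ = r ∧ 2 * r ≤ ‖w₁ z‖ ^ 2 + ‖w₂ z‖ ^ 2 := by
    intro r hr0 hr1
    obtain ⟨z, hz, hle⟩ := exists_norm_eq_mul_norm_deriv_le h₁ h₂ h0 hr0 hr1
    rw [hv0, norm_neg, norm_one, mul_one] at hle
    exact ⟨z, hz, by linarith [two_mul_le_add_sq ‖w₁ z‖ ‖w₂ z‖]⟩
  refine ⟨fun r hr0 hr1 ↦ ?_, fun δ hδ ↦ ?_⟩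
  · obtain ⟨z, hz, hS⟩ := key r hr0 hr1
    refine ⟨z, hz, ?_⟩
    rw [hz, mul_one_div, div_le_div_iff₀ (by linarith) two_pos]
    linarith
  · -- at radius `r = (1 + δ) / (1 + 2δ)` the bound `1 / (2r)` is `(1 + 2δ) / (2 + 2δ) < 1/2 + δ`
    have hr0 : 0 < (1 + δ) / (1 + 2 * δ) := by positivity
    have hr1 : (1 + δ) / (1 + 2 * δ) < 1 := by rw [div_lt_one (by positivity)]; linarith
    obtain ⟨z, hz, hS⟩ := key _ hr0 hr1
    refine ⟨z, mem_ball_zero_iff.2 (hz ▸ hr1), ?_⟩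
    rw [div_lt_iff₀ (by linarith)]
    field_simp at hS
    nlinarith
end

section
/- Let f be meromorphic on the unit disc with f^#(z) ≥ ε > 0 for all z. Then f^#(z) ≤ (1/ε)/(1-|z|²)² for all z ∈ 𝔻. -/
/-!
Fix `z₀` where `f` is holomorphic, let `a = f z₀` and `G = (f - a)² / ((1 + |a|²) f')`.
Writing the rotated function `(f - a) / (1 + ā f)` as `w₁ / w₂` with Wronskian `1` gives
`G = w₁²`, and `|G| = χ(f, a)² / f^# ≤ 1 / ε` with `χ` the chordal distance. The poles of `f` are
isolated, so `G` extends to a holomorphic function on the disc bounded by `1 / ε`; it has a double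
zero at `z₀` with `|G''(z₀) / 2| = f^#(z₀)`. The Schwarz–Pick estimate for bounded functions with
a double zero, `|G''(z₀) / 2| (1 - |z₀|²)² ≤ sup |G|`, finishes the proof. At a pole of `f` the
same argument applies to `1 / f`, which has the same spherical derivative.
-/

open Complex Metric

/-- The spherical derivative extended by continuity at poles, using the
invariance `f^# = (1/f)^#`. -/
noncomputable def sphDerivExt (f : ℂ → ℂ) (z : ℂ) : ℝ :=
  max (sphDeriv f z) (sphDeriv (fun w => (f w)⁻¹) z)

open Filter Topology ComplexConjugate Function

section SphericalDerivative

variable {f : ℂ → ℂ} {p : ℂ}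

lemma sphDeriv_nonneg (f : ℂ → ℂ) (z : ℂ) : 0 ≤ sphDeriv f z := by
  unfold sphDeriv; positivity

lemma sphDeriv_eq_zero_of_deriv_eq_zero (h : deriv f p = 0) : sphDeriv f p = 0 := by
  simp [sphDeriv, h]

lemma deriv_ne_zero_of_sphDeriv_pos (h : 0 < sphDeriv f p) : deriv f p ≠ 0 :=
  fun h0 => h.ne' (sphDeriv_eq_zero_of_deriv_eq_zero h0)

lemma MeromorphicAt.analyticAt_of_differentiableAt (hf : MeromorphicAt f p)
    (hd : DifferentiableAt ℂ f p) : AnalyticAt ℂ f p := by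
  rw [analyticAt_iff_eventually_differentiableAt, ← nhdsNE_sup_pure, eventually_sup]
  exact ⟨hf.eventually_analyticAt.mono fun _ h => h.differentiableAt, hd⟩

lemma MeromorphicAt.sphDeriv_eq_zero_of_not_analyticAt (hf : MeromorphicAt f p)
    (h : ¬AnalyticAt ℂ f p) : sphDeriv f p = 0 :=
  sphDeriv_eq_zero_of_deriv_eq_zero <| deriv_zero_of_not_differentiableAt fun hd =>
    h (hf.analyticAt_of_differentiableAt hd)

lemma sphDeriv_inv_of_ne_zero (hd : DifferentiableAt ℂ f p) (h0 : f p ≠ 0) :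
    sphDeriv (fun w => (f w)⁻¹) p = sphDeriv f p := by
  have h0' : 0 < ‖f p‖ := norm_pos_iff.2 h0
  simp only [sphDeriv, deriv_fun_inv'' hd h0, norm_div, norm_neg, norm_pow, norm_inv]
  field_simp
  ring

lemma sphDeriv_inv_le_of_analyticAt (hf : AnalyticAt ℂ f p) :
    sphDeriv (fun w => (f w)⁻¹) p ≤ sphDeriv f p := by
  by_cases h0 : f p = 0
  swap
  · exact (sphDeriv_inv_of_ne_zero hf.differentiableAt h0).le
  rcases hf.eventually_eq_zero_or_eventually_ne_zero with hzero | hne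
  · have hinv : (fun w => (f w)⁻¹) =ᶠ[𝓝 p] fun _ => 0 :=
      hzero.mono fun w hw => by simp [hw]
    rw [sphDeriv_eq_zero_of_deriv_eq_zero (by rw [hinv.deriv_eq, deriv_const])]
    exact sphDeriv_nonneg f p
  -- `f * f⁻¹` is `1` on a punctured neighbourhood of `p` but vanishes at `p`.
  have hinv : ¬AnalyticAt ℂ (fun w => (f w)⁻¹) p := by
    intro hu
    have hone : (fun w => f w * (f w)⁻¹) =ᶠ[𝓝[≠] p] fun _ => 1 :=
      hne.mono fun w hw => mul_inv_cancel₀ hw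
    have := (((hf.continuousAt.mul hu.continuousAt).eventuallyEq_nhds_iff_eventuallyEq_nhdsNE
      continuousAt_const).1 hone).eq_of_nhds
    simp [h0] at this
  rw [hf.meromorphicAt.fun_inv.sphDeriv_eq_zero_of_not_analyticAt hinv]
  exact sphDeriv_nonneg f p

lemma sphDerivExt_eq_of_analyticAt (hf : AnalyticAt ℂ f p) : sphDerivExt f p = sphDeriv f p :=
  max_eq_left (sphDeriv_inv_le_of_analyticAt hf)

lemma sphDerivExt_inv (f : ℂ → ℂ) (z : ℂ) :
    sphDerivExt (fun w => (f w)⁻¹) z = sphDerivExt f z := by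
  simp only [sphDerivExt, inv_inv]
  exact max_comm _ _

lemma MeromorphicAt.analyticAt_or_analyticAt_inv (hf : MeromorphicAt f p)
    (h : 0 < sphDerivExt f p) : AnalyticAt ℂ f p ∨ AnalyticAt ℂ (fun w => (f w)⁻¹) p := by
  by_contra! hboth
  have h₁ := hf.sphDeriv_eq_zero_of_not_analyticAt hboth.1
  have h₂ := hf.fun_inv.sphDeriv_eq_zero_of_not_analyticAt hboth.2
  simp [sphDerivExt, h₁, h₂] at h

end SphericalDerivative

noncomputable def chordalQuotient (f : ℂ → ℂ) (a z : ℂ) : ℂ :=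
  (f z - a) ^ 2 / ((1 + ‖a‖ ^ 2 : ℝ) * deriv f z)

lemma norm_sub_sq_le_mul_one_add_sq (x y : ℂ) :
    ‖x - y‖ ^ 2 ≤ (1 + ‖x‖ ^ 2) * (1 + ‖y‖ ^ 2) := by
  have := norm_sub_le x y
  nlinarith [norm_nonneg x, norm_nonneg y, norm_nonneg (x - y), sq_nonneg (1 - ‖x‖ * ‖y‖)]

lemma norm_chordalQuotient_le {f : ℂ → ℂ} {a z : ℂ} {ε : ℝ} (hε : 0 < ε)
    (h : ε ≤ sphDeriv f z) : ‖chordalQuotient f a z‖ ≤ 1 / ε := by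
  have hd : ε * (1 + ‖f z‖ ^ 2) ≤ ‖deriv f z‖ := by
    rwa [sphDeriv, le_div_iff₀ (by positivity)] at h
  have hchord := norm_sub_sq_le_mul_one_add_sq (f z) a
  have ha : 0 < 1 + ‖a‖ ^ 2 := by positivity
  have hd' : 0 < ‖deriv f z‖ := lt_of_lt_of_le (by positivity) hd
  rw [chordalQuotient, norm_div, norm_pow, norm_mul, norm_real, Real.norm_of_nonneg ha.le,
    div_le_div_iff₀ (by positivity) hε]
  nlinarith [mul_le_mul_of_nonneg_right hd ha.le]

lemma differentiableAt_chordalQuotient {f : ℂ → ℂ} {a z : ℂ} (hf : AnalyticAt ℂ f z)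
    (h : deriv f z ≠ 0) : DifferentiableAt ℂ (chordalQuotient f a) z := by
  have hd : DifferentiableAt ℂ (deriv f) z := hf.deriv.differentiableAt
  have hc : ((1 + ‖a‖ ^ 2 : ℝ) : ℂ) ≠ 0 := ofReal_ne_zero.2 (by positivity)
  exact ((hf.differentiableAt.sub_const a).pow 2).div (hd.const_mul _) (mul_ne_zero hc h)

lemma chordalQuotient_eq_sub_sq_mul (f : ℂ → ℂ) (z₀ z : ℂ) :
    chordalQuotient f (f z₀) z =
      (z - z₀) ^ 2 * ((dslope f z₀ z) ^ 2 / ((1 + ‖f z₀‖ ^ 2 : ℝ) * deriv f z)) := by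
  rw [chordalQuotient, ← sub_smul_dslope f z₀ z, smul_eq_mul, mul_pow, mul_div_assoc]

section RemovableSingularity

variable {E : Type*} [NormedAddCommGroup E] {G : ℂ → E} {p : ℂ}

lemma limUnder_nhdsNE_eq_of_continuousAt (h : ContinuousAt G p) : limUnder (𝓝[≠] p) G = G p :=
  (h.tendsto.mono_left nhdsWithin_le_nhds).limUnder_eq

variable [NormedSpace ℂ E] [CompleteSpace E] {C : ℝ}

lemma differentiableAt_limUnder_nhdsNE
    (hG : ∀ᶠ z in 𝓝[≠] p, DifferentiableAt ℂ G z ∧ ‖G z‖ ≤ C) :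
    DifferentiableAt ℂ (fun z => limUnder (𝓝[≠] z) G) p := by
  obtain ⟨s, hs, hso, hps⟩ := _root_.eventually_nhds_iff.1 (eventually_nhdsWithin_iff.1 hG)
  have hd : DifferentiableOn ℂ (update G p (limUnder (𝓝[≠] p) G)) s := by
    refine differentiableOn_update_limUnder_of_bddAbove (hso.mem_nhds hps)
      (fun z hz => (hs z hz.1 hz.2).1.differentiableWithinAt) ⟨C, ?_⟩
    rintro _ ⟨z, hz, rfl⟩
    exact (hs z hz.1 hz.2).2
  refine (hd.differentiableAt (hso.mem_nhds hps)).congr_of_eventuallyEq ?_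
  filter_upwards [hso.mem_nhds hps] with z hz
  rcases eq_or_ne z p with rfl | hzp
  · simp
  · rw [update_of_ne hzp, limUnder_nhdsNE_eq_of_continuousAt (hs z hz hzp).1.continuousAt]

lemma norm_limUnder_nhdsNE_le (hG : ∀ᶠ z in 𝓝[≠] p, DifferentiableAt ℂ G z ∧ ‖G z‖ ≤ C) :
    ‖limUnder (𝓝[≠] p) G‖ ≤ C := by
  have hcont := (differentiableAt_limUnder_nhdsNE hG).continuousAt
  refine le_of_tendsto (hcont.tendsto.mono_left (nhdsWithin_le_nhds (s := {p}ᶜ))).norm ?_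
  filter_upwards [hG] with z hz
  rw [limUnder_nhdsNE_eq_of_continuousAt hz.1.continuousAt]
  exact hz.2

end RemovableSingularity

lemma exists_differentiableOn_eq_sub_sq_mul {G K₀ : ℂ → ℂ} {s : Set ℂ} {z₀ : ℂ} (hs : s ∈ 𝓝 z₀)
    (hG : DifferentiableOn ℂ G s) (hK₀ : ContinuousAt K₀ z₀)
    (heq : G =ᶠ[𝓝 z₀] fun z => (z - z₀) ^ 2 * K₀ z) :
    ∃ K, DifferentiableOn ℂ K s ∧ K z₀ = K₀ z₀ ∧ ∀ z, G z = (z - z₀) ^ 2 * K z := by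
  have hD : DifferentiableOn ℂ (dslope G z₀) s := (differentiableOn_dslope hs).2 hG
  have hK : DifferentiableOn ℂ (dslope (dslope G z₀) z₀) s := (differentiableOn_dslope hs).2 hD
  have hG₀ : G z₀ = 0 := by simpa using heq.eq_of_nhds
  have hDeq : dslope G z₀ =ᶠ[𝓝[≠] z₀] fun z => (z - z₀) * K₀ z := by
    filter_upwards [heq.filter_mono nhdsWithin_le_nhds, self_mem_nhdsWithin] with z hz hne
    rw [dslope_of_ne _ hne, slope_def_field, hz, hG₀, sub_zero]
    field_simp [sub_ne_zero.2 hne]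
  have hD₀ : dslope G z₀ z₀ = 0 := by
    simpa using ((((hD.differentiableAt hs).continuousAt).eventuallyEq_nhds_iff_eventuallyEq_nhdsNE
      (by fun_prop)).1 hDeq).eq_of_nhds
  have hKeq : dslope (dslope G z₀) z₀ =ᶠ[𝓝[≠] z₀] K₀ := by
    filter_upwards [hDeq, self_mem_nhdsWithin] with z hz hne
    rw [dslope_of_ne _ hne, slope_def_field, hz, hD₀, sub_zero]
    field_simp [sub_ne_zero.2 hne]
  refine ⟨_, hK, ((((hK.differentiableAt hs).continuousAt).eventuallyEq_nhds_iff_eventuallyEq_nhdsNE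
    hK₀).1 hKeq).eq_of_nhds, fun z => ?_⟩
  have hGD := sub_smul_dslope G z₀ z
  have hDK := sub_smul_dslope (dslope G z₀) z₀ z
  rw [smul_eq_mul, hG₀, sub_zero] at hGD
  rw [smul_eq_mul, hD₀, sub_zero] at hDK
  rw [← hGD, ← hDK]
  ring

lemma norm_one_sub_conj_mul_mul_le {z₀ z : ℂ} (hr : ‖z₀‖ ≤ ‖z‖) (hs : ‖z‖ ≤ 1) :
    ‖1 - conj z₀ * z‖ * (‖z‖ - ‖z₀‖) ≤ (1 - ‖z₀‖ * ‖z‖) * ‖z - z₀‖ := by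
  have hmob : ‖1 - conj z₀ * z‖ ^ 2 = ‖z - z₀‖ ^ 2 + (1 - ‖z₀‖ ^ 2) * (1 - ‖z‖ ^ 2) := by
    simp only [Complex.sq_norm, normSq_apply, sub_re, sub_im, mul_re, mul_im, conj_re, conj_im,
      one_re, one_im]
    ring
  have hdist : ‖z‖ - ‖z₀‖ ≤ ‖z - z₀‖ := norm_sub_norm_le z z₀
  have hr0 := norm_nonneg z₀
  have hr1 : 0 ≤ 1 - ‖z₀‖ ^ 2 := by nlinarith
  have hs1 : 0 ≤ 1 - ‖z‖ ^ 2 := by nlinarith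
  have hrs : 0 ≤ 1 - ‖z₀‖ * ‖z‖ := by nlinarith
  rw [← pow_le_pow_iff_left₀ (mul_nonneg (norm_nonneg _) (by linarith))
    (mul_nonneg hrs (norm_nonneg _)) two_ne_zero, mul_pow, mul_pow, hmob]
  nlinarith [mul_nonneg (mul_nonneg hr1 hs1)
    (by nlinarith : 0 ≤ ‖z - z₀‖ ^ 2 - (‖z‖ - ‖z₀‖) ^ 2)]

lemma norm_mul_one_sub_sq_sq_le_of_norm_sub_sq_mul_le {K : ℂ → ℂ} {z₀ : ℂ} {C : ℝ}
    (hz₀ : z₀ ∈ ball (0 : ℂ) 1) (hK : DifferentiableOn ℂ K (ball 0 1))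
    (hb : ∀ z ∈ ball (0 : ℂ) 1, ‖(z - z₀) ^ 2 * K z‖ ≤ C) :
    ‖K z₀‖ * (1 - ‖z₀‖ ^ 2) ^ 2 ≤ C := by
  set r := ‖z₀‖
  have hr1 : r < 1 := mem_ball_zero_iff.1 hz₀
  -- `K(z) (1 - z̄₀ z)²` is `(z - z₀)² K(z)` divided by the square of the Blaschke factor.
  set L : ℂ → ℂ := fun z => K z * (1 - conj z₀ * z) ^ 2
  have hL : DifferentiableOn ℂ L (ball 0 1) := hK.mul (by fun_prop)
  have hLz₀ : ‖L z₀‖ = ‖K z₀‖ * (1 - r ^ 2) ^ 2 := by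
    have : 1 - conj z₀ * z₀ = ((1 - r ^ 2 : ℝ) : ℂ) := by
      rw [mul_comm, mul_conj, normSq_eq_norm_sq]; push_cast; ring
    rw [norm_mul, norm_pow, this, norm_real, Real.norm_of_nonneg (by nlinarith [norm_nonneg z₀])]
  have hcircle : ∀ s ∈ Set.Ioo r 1, ‖L z₀‖ ≤ C * ((1 - r * s) / (s - r)) ^ 2 := by
    rintro s ⟨hrs, hs1⟩
    have hs0 : 0 < s := (norm_nonneg z₀).trans_lt hrs
    refine Complex.norm_le_of_forall_mem_frontier_norm_le isBounded_ball
      (hL.diffContOnCl_ball (closedBall_subset_ball hs1)) (fun z hz => ?_)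
      (subset_closure (mem_ball_zero_iff.2 hrs))
    rw [frontier_ball 0 hs0.ne', mem_sphere_zero_iff_norm] at hz
    have hKz : ‖K z‖ * ‖z - z₀‖ ^ 2 ≤ C := by
      simpa [norm_mul, mul_comm] using hb z (mem_ball_zero_iff.2 (hz.trans_lt hs1))
    have hmob := norm_one_sub_conj_mul_mul_le (hz ▸ hrs.le) (hz ▸ hs1.le)
    rw [hz] at hmob
    have hsr : 0 < s - r := sub_pos.2 hrs
    calc ‖L z‖ = ‖K z‖ * (‖1 - conj z₀ * z‖ * (s - r)) ^ 2 / (s - r) ^ 2 := by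
          simp only [L, norm_mul, norm_pow]; field_simp
      _ ≤ ‖K z‖ * ((1 - r * s) * ‖z - z₀‖) ^ 2 / (s - r) ^ 2 := by gcongr
      _ = ‖K z‖ * ‖z - z₀‖ ^ 2 * ((1 - r * s) / (s - r)) ^ 2 := by field_simp
      _ ≤ C * ((1 - r * s) / (s - r)) ^ 2 := by gcongr
  have hlim : Tendsto (fun s => C * ((1 - r * s) / (s - r)) ^ 2) (𝓝[<] 1) (𝓝 C) := by
    have hcont : ContinuousAt (fun s : ℝ => C * ((1 - r * s) / (s - r)) ^ 2) 1 := by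
      fun_prop (disch := exact sub_ne_zero.2 hr1.ne')
    have h1 : C * ((1 - r * 1) / (1 - r)) ^ 2 = C := by
      rw [mul_one, div_self (sub_ne_zero.2 hr1.ne'), one_pow, mul_one]
    simpa only [h1] using hcont.tendsto.mono_left nhdsWithin_le_nhds
  rw [← hLz₀]
  exact ge_of_tendsto hlim (mem_of_superset (Ioo_mem_nhdsLT hr1) hcircle)

lemma sphDeriv_le_of_analyticAt {ε : ℝ} (hε : 0 < ε) {f : ℂ → ℂ}
    (hf : MeromorphicOn f (ball (0 : ℂ) 1)) (hlb : ∀ z ∈ ball (0 : ℂ) 1, ε ≤ sphDerivExt f z)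
    {z₀ : ℂ} (hz₀ : z₀ ∈ ball (0 : ℂ) 1) (hA : AnalyticAt ℂ f z₀) :
    sphDeriv f z₀ ≤ (1 / ε) / (1 - ‖z₀‖ ^ 2) ^ 2 := by
  set G := chordalQuotient f (f z₀)
  have hgood : ∀ z ∈ ball (0 : ℂ) 1, AnalyticAt ℂ f z →
      DifferentiableAt ℂ G z ∧ ‖G z‖ ≤ 1 / ε := by
    intro z hz hfz
    have hsph : ε ≤ sphDeriv f z := sphDerivExt_eq_of_analyticAt hfz ▸ hlb z hz
    exact ⟨differentiableAt_chordalQuotient hfz (deriv_ne_zero_of_sphDeriv_pos (hε.trans_le hsph)),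
      norm_chordalQuotient_le hε hsph⟩
  have hnear : ∀ p ∈ ball (0 : ℂ) 1, ∀ᶠ z in 𝓝[≠] p, DifferentiableAt ℂ G z ∧ ‖G z‖ ≤ 1 / ε :=
    fun p hp => by
      filter_upwards [(hf p hp).eventually_analyticAt,
        nhdsWithin_le_nhds (isOpen_ball.mem_nhds hp)] with z hfz hz using hgood z hz hfz
  set K₀ : ℂ → ℂ := fun z => (dslope f z₀ z) ^ 2 / ((1 + ‖f z₀‖ ^ 2 : ℝ) * deriv f z)
  have hder : deriv f z₀ ≠ 0 :=
    deriv_ne_zero_of_sphDeriv_pos (hε.trans_le (sphDerivExt_eq_of_analyticAt hA ▸ hlb z₀ hz₀))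
  have hK₀ : ContinuousAt K₀ z₀ := by
    have hc : ((1 + ‖f z₀‖ ^ 2 : ℝ) : ℂ) ≠ 0 := ofReal_ne_zero.2 (by positivity)
    exact ((continuousAt_dslope_same.2 hA.differentiableAt).pow 2).div
      (continuousAt_const.mul hA.deriv.continuousAt) (mul_ne_zero hc hder)
  have heq : (fun z => limUnder (𝓝[≠] z) G) =ᶠ[𝓝 z₀] fun z => (z - z₀) ^ 2 * K₀ z := by
    filter_upwards [hA.eventually_analyticAt, isOpen_ball.mem_nhds hz₀] with z hfz hz
    rw [limUnder_nhdsNE_eq_of_continuousAt (hgood z hz hfz).1.continuousAt]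
    exact chordalQuotient_eq_sub_sq_mul f z₀ z
  obtain ⟨K, hK, hKz₀, hGK⟩ := exists_differentiableOn_eq_sub_sq_mul (isOpen_ball.mem_nhds hz₀)
    (fun p hp => (differentiableAt_limUnder_nhdsNE (hnear p hp)).differentiableWithinAt) hK₀ heq
  have hSP := norm_mul_one_sub_sq_sq_le_of_norm_sub_sq_mul_le hz₀ hK
    fun z hz => hGK z ▸ norm_limUnder_nhdsNE_le (hnear z hz)
  have hKf : ‖K z₀‖ = sphDeriv f z₀ := by
    have hc : 0 < 1 + ‖f z₀‖ ^ 2 := by positivity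
    simp only [hKz₀, K₀]
    rw [dslope_same, sq, mul_div_mul_right _ _ hder, norm_div, norm_real,
      Real.norm_of_nonneg hc.le, sphDeriv]
  have hr : 0 < 1 - ‖z₀‖ ^ 2 := by nlinarith [mem_ball_zero_iff.1 hz₀, norm_nonneg z₀]
  rwa [← hKf, le_div_iff₀ (pow_pos hr 2)]

/-- If `f` is meromorphic on the unit disc with `f^# ≥ ε > 0`, then
`f^#(z) ≤ (1/ε)/(1-|z|²)²` for all `z` in the disc. -/
theorem stmt17 (ε : ℝ) (hε : 0 < ε) (f : ℂ → ℂ)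
    (hf : MeromorphicOn f (ball (0 : ℂ) 1))
    (hlb : ∀ z ∈ ball (0 : ℂ) 1, ε ≤ sphDerivExt f z) :
    ∀ z ∈ ball (0 : ℂ) 1, sphDerivExt f z ≤ (1 / ε) / (1 - ‖z‖ ^ 2) ^ 2 := by
  intro z hz
  rcases (hf z hz).analyticAt_or_analyticAt_inv (hε.trans_le (hlb z hz)) with hA | hA
  · rw [sphDerivExt_eq_of_analyticAt hA]
    exact sphDeriv_le_of_analyticAt hε hf hlb hz hA
  · rw [← sphDerivExt_inv, sphDerivExt_eq_of_analyticAt hA]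
    refine sphDeriv_le_of_analyticAt hε (fun w hw => (hf w hw).fun_inv) (fun w hw => ?_) hz hA
    rw [sphDerivExt_inv]
    exact hlb w hw
end
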